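/- arXiv:1905.12318 — 3 statements merged into one kernel-verified Lean document; each statement's English description precedes it below -/
import Mathlib

section
/- If $G$ is a $(3,2)$-critical graph that contains at least three odd cycles, then every two distinct odd cycles of $G$ intersect in more than one vertex. -/
open SimpleGraph

/-- The chromatic edge-stability number `esχ(G)`: the minimum number of edges whose
removal from `G` results in a spanning subgraph `G'` with `χ(G') = χ(G) - 1`. -/
noncomputable def esChi {V : Type} (G : SimpleGraph V) : ℕ :=
  sInf {n : ℕ | ∃ F : Finset (Sym2 V), ↑F ⊆ G.edgeSet ∧ F.card = n ∧
    (G.deleteEdges ↑F).chromaticNumber + 1 = G.chromaticNumber}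

/-- A graph is edge-stability critical if deleting any edge decreases `esχ`. -/
def EdgeStabilityCritical {V : Type} (G : SimpleGraph V) : Prop :=
  ∀ e ∈ G.edgeSet, esChi (G.deleteEdges {e}) < esChi G

/-- `G` is `(k, ℓ)`-critical: edge-stability critical with `χ(G) = k` and `esχ(G) = ℓ`. -/
def IsKLCritical {V : Type} (G : SimpleGraph V) (k ℓ : ℕ) : Prop :=
  EdgeStabilityCritical G ∧ G.chromaticNumber = (k : ℕ∞) ∧ esChi G = ℓ

/-- `H` is an odd cycle subgraph of `G`: the subgraph of some odd-length cycle of `G`. -/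
def IsOddCycleSubgraph {V : Type} (G : SimpleGraph V) (H : G.Subgraph) : Prop :=
  ∃ (u : V) (w : G.Walk u u), w.IsCycle ∧ Odd w.length ∧ w.toSubgraph = H

/-- `H` is a path subgraph of `G`: the subgraph of some path of `G`. -/
def IsPathSubgraph {V : Type} (G : SimpleGraph V) (H : G.Subgraph) : Prop :=
  ∃ (u v : V) (w : G.Walk u v), w.IsPath ∧ w.toSubgraph = H

/-!
If two odd cycles `C₁`, `C₂` met in at most one vertex, they would be edge-disjoint. For an edge
`f` on neither of them, `G - f` still has chromatic number 3 (it contains `C₁`), so by criticality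
a single edge `g` makes `G - f` bipartite; but `g` would have to lie on both cycles. Hence every
edge of `G` lies on `C₁` or `C₂`. A cycle inside `C₁ ∪ C₂` using edges of both would have to pass
from one to the other at two distinct common vertices, so it lies inside one of them, say `C₁`;
the same argument applied to it and `C₂` shows that it is `C₁`. So `C₁` and `C₂` would be the only
odd cycles of `G`.
-/

open Fin.NatCast in
theorem Fin.exists_and_not_add_one {n : ℕ} [NeZero n] {P : Fin n → Prop} {a b : Fin n}
    (ha : P a) (hb : ¬P b) : ∃ i, P i ∧ ¬P (i + 1) := by
  by_contra! h
  have hP (k : ℕ) : P (a + (k : Fin n)) := by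
    induction k with
    | zero => simpa using ha
    | succ k ih => simpa [add_assoc] using h _ ih
  exact hb (by simpa using hP (b - a : Fin n))

namespace SimpleGraph

variable {V : Type} {G : SimpleGraph V}

theorem Walk.getVert_val_add_one {u : V} (w : G.Walk u u) [NeZero w.length] (i : Fin w.length) :
    w.getVert ↑(i + 1) = w.getVert (↑i + 1) := by
  rw [Fin.val_add, Fin.val_one', Nat.add_mod_mod]
  rcases (Nat.add_one_le_of_lt i.isLt).lt_or_eq with h | h
  · rw [Nat.mod_eq_of_lt h]
  · rw [h, Nat.mod_self, Walk.getVert_zero, Walk.getVert_length]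

theorem Walk.IsCycle.edges_subset_or_edges_subset {u a b c d : V} {w : G.Walk u u}
    (hw : w.IsCycle) {w₁ : G.Walk a b} {w₂ : G.Walk c d}
    (hv : ({v | v ∈ w₁.support} ∩ {v | v ∈ w₂.support}).Subsingleton)
    (hsub : ∀ e ∈ w.edges, e ∈ w₁.edges ∨ e ∈ w₂.edges) :
    w.edges ⊆ w₁.edges ∨ w.edges ⊆ w₂.edges := by
  have : NeZero w.length := ⟨by have := hw.three_le_length; omega⟩
  set E : Fin w.length → Sym2 V := fun i => s(w.getVert i, w.getVert (i + 1))
  have hEw (i : Fin w.length) : E i ∈ w.edges := w.mk_mem_edges_iff_exists.mpr ⟨i, i.isLt, rfl⟩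
  have hwE {e : Sym2 V} (he : e ∈ w.edges) : ∃ i, E i = e := by
    induction e using Sym2.ind with
    | h x y =>
      obtain ⟨i, hi, hxy⟩ := w.mk_mem_edges_iff_exists.mp he
      exact ⟨⟨i, hi⟩, hxy⟩
  have hshared (i : Fin w.length) : w.getVert ↑(i + 1) ∈ E i ∧ w.getVert ↑(i + 1) ∈ E (i + 1) :=
    ⟨w.getVert_val_add_one i ▸ Sym2.mem_mk_right _ _, Sym2.mem_mk_left _ _⟩
  by_contra! h
  simp only [List.subset_def, not_forall, exists_prop] at h
  obtain ⟨⟨_, he₁, he₁'⟩, ⟨_, he₂, he₂'⟩⟩ := h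
  obtain ⟨a, rfl⟩ := hwE he₁
  obtain ⟨b, rfl⟩ := hwE he₂
  -- the cycle switches from `w₁` to `w₂` after edge `i` and back after edge `j`
  obtain ⟨i, hi, hi'⟩ := Fin.exists_and_not_add_one (P := fun k => E k ∈ w₁.edges)
    ((hsub _ he₂).resolve_right he₂') he₁'
  obtain ⟨j, hj, hj'⟩ := Fin.exists_and_not_add_one (P := fun k => E k ∉ w₁.edges)
    he₁' (not_not.mpr ((hsub _ he₂).resolve_right he₂'))
  have hij := hv
    ⟨w₁.mem_support_of_mem_edges hi (hshared i).1,
      w₂.mem_support_of_mem_edges ((hsub _ (hEw _)).resolve_left hi') (hshared i).2⟩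
    ⟨w₁.mem_support_of_mem_edges (not_not.mp hj') (hshared j).2,
      w₂.mem_support_of_mem_edges ((hsub _ (hEw _)).resolve_left hj) (hshared j).1⟩
  have := hw.getVert_injOn' (Nat.le_sub_one_of_lt (i + 1).isLt)
    (Nat.le_sub_one_of_lt (j + 1).isLt) hij
  exact hj (add_right_cancel (Fin.ext this) ▸ hi)

theorem Walk.edges_disjoint_of_subsingleton {a b c d : V} {w₁ : G.Walk a b} {w₂ : G.Walk c d}
    (hv : ({v | v ∈ w₁.support} ∩ {v | v ∈ w₂.support}).Subsingleton) :
    w₁.edges.Disjoint w₂.edges := by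
  intro e he₁ he₂
  induction e using Sym2.ind with
  | h x y =>
    exact G.ne_of_adj (w₁.adj_of_mem_edges he₁) (hv
      ⟨w₁.fst_mem_support_of_mem_edges he₁, w₂.fst_mem_support_of_mem_edges he₂⟩
      ⟨w₁.snd_mem_support_of_mem_edges he₁, w₂.snd_mem_support_of_mem_edges he₂⟩)

theorem Walk.toSubgraph_eq_of_mem_edges_iff {a b c d : V} {w : G.Walk a b} {w' : G.Walk c d}
    (hw : ¬w.Nil) (hw' : ¬w'.Nil) (h : ∀ e, e ∈ w.edges ↔ e ∈ w'.edges) :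
    w.toSubgraph = w'.toSubgraph :=
  le_antisymm ((toSubgraph_le_iff hw).mpr (w'.edgeSet_toSubgraph ▸ fun e => (h e).mp))
    ((toSubgraph_le_iff hw').mpr (w.edgeSet_toSubgraph ▸ fun e => (h e).mpr))

theorem Walk.exists_mem_edges_of_colorable_two {u : V} (w : G.Walk u u) (hw : Odd w.length)
    {s : Set (Sym2 V)} (h : (G.deleteEdges s).Colorable 2) : ∃ e ∈ w.edges, e ∈ s := by
  by_contra! hs
  have hsub : ∀ e ∈ w.edges, e ∈ (G.deleteEdges s).edgeSet := fun e he => by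
    rw [edgeSet_deleteEdges]
    exact ⟨w.edges_subset_edgeSet he, hs e he⟩
  have := (w.transfer _ hsub).three_le_chromaticNumber_of_odd_loop (by rwa [Walk.length_transfer])
  have := this.trans h.chromaticNumber_le
  norm_num at this

theorem exists_chromaticNumber_deleteEdges_add_one [Finite V] {k : ℕ}
    (h : G.chromaticNumber = k + 1 + 1) :
    ∃ F : Finset (Sym2 V), ↑F ⊆ G.edgeSet ∧
      (G.deleteEdges ↑F).chromaticNumber + 1 = G.chromaticNumber := by
  obtain ⟨hcol, hncol⟩ := chromaticNumber_eq_iff_colorable_not_colorable.mp (by exact_mod_cast h)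
  obtain ⟨c, hc⟩ := (colorable_iff_exists_bdd_nat_coloring _).mp hcol
  -- deleting the edges at the top colour class isolates it
  set F : Set (Sym2 V) := {e ∈ G.edgeSet | ∃ v ∈ e, c v = k + 1}
  have hF {a b : V} (hab : G.Adj a b) (habF : s(a, b) ∉ F) : c a ≠ k + 1 ∧ c b ≠ k + 1 := by
    simp_all [F]
  refine ⟨F.toFinite.toFinset, by simp [F], ?_⟩
  rw [Set.Finite.coe_toFinset, h]
  suffices (G.deleteEdges F).chromaticNumber = k + 1 by rw [this]
  refine chromaticNumber_eq_iff_colorable_not_colorable.mpr ⟨?_, fun hk => hncol ?_⟩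
  · refine (colorable_iff_exists_bdd_nat_coloring _).mpr
      ⟨Coloring.mk (fun v => if c v = k + 1 then 0 else c v) fun {a b} hab => ?_, fun v => ?_⟩
    · rw [deleteEdges_adj] at hab
      simp [hF hab.1 hab.2, c.valid hab.1]
    · show (if _ then _ else _) < _
      have := hc v
      split_ifs <;> omega
  · -- the last colour class can be put back as a new colour
    obtain ⟨c', hc'⟩ := (colorable_iff_exists_bdd_nat_coloring _).mp hk
    refine (colorable_iff_exists_bdd_nat_coloring _).mpr
      ⟨Coloring.mk (fun v => if c v = k + 1 then k else c' v) fun {a b} hab => ?_, fun v => ?_⟩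
    · have := c.valid hab
      have := hc' a
      have := hc' b
      by_cases hsab : s(a, b) ∈ F
      · obtain ⟨-, v, hv, hcv⟩ := hsab
        rcases Sym2.mem_iff.mp hv with rfl | rfl <;> simp [hcv] <;> omega
      · have := c'.valid (deleteEdges_adj.mpr ⟨hab, hsab⟩)
        simp [hF hab hsab, this]
    · show (if _ then _ else _) < _
      have := hc' v
      split_ifs <;> omega

end SimpleGraph

variable {V : Type} {G : SimpleGraph V}

theorem exists_card_eq_esChi [Finite V] {k : ℕ} (h : G.chromaticNumber = k + 1 + 1) :
    ∃ F : Finset (Sym2 V), ↑F ⊆ G.edgeSet ∧ F.card = esChi G ∧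
      (G.deleteEdges ↑F).chromaticNumber + 1 = G.chromaticNumber := by
  obtain ⟨F, hF, hχ⟩ := exists_chromaticNumber_deleteEdges_add_one h
  exact Nat.sInf_mem (s := {n | ∃ F : Finset (Sym2 V), ↑F ⊆ G.edgeSet ∧ F.card = n ∧
    (G.deleteEdges ↑F).chromaticNumber + 1 = G.chromaticNumber}) ⟨F.card, F, hF, rfl, hχ⟩

theorem IsKLCritical.mem_edges_or_mem_edges [Finite V] (hG : IsKLCritical G 3 2) {a b : V}
    {wa : G.Walk a a} {wb : G.Walk b b} (ha : Odd wa.length) (hb : Odd wb.length)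
    (hab : wa.edges.Disjoint wb.edges) {f : Sym2 V} (hf : f ∈ G.edgeSet) :
    f ∈ wa.edges ∨ f ∈ wb.edges := by
  obtain ⟨hcrit, hχ, hes⟩ := hG
  by_contra! hfab
  have hχ' : (G.deleteEdges {f}).chromaticNumber = (1 : ℕ) + 1 + 1 := by
    refine chromaticNumber_eq_iff_colorable_not_colorable.mpr ⟨?_, fun h => ?_⟩
    · exact chromaticNumber_le_iff_colorable.mp (hχ ▸ chromaticNumber_mono _ (deleteEdges_le _))
    · obtain ⟨e, he, rfl⟩ := wa.exists_mem_edges_of_colorable_two ha h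
      exact hfab.1 he
  obtain ⟨F, -, hcard, hF⟩ := exists_card_eq_esChi hχ'
  have hcol : (G.deleteEdges ({f} ∪ ↑F)).Colorable 2 := by
    rw [← deleteEdges_deleteEdges, ← chromaticNumber_le_iff_colorable]
    exact (ENat.add_le_add_iff_right ENat.one_ne_top).mp (by rw [hF, hχ']; norm_num)
  have hmeet {c : V} {w : G.Walk c c} (hw : Odd w.length) (hfw : f ∉ w.edges) :
      ∃ e ∈ w.edges, e ∈ F := by
    obtain ⟨e, he, hef | heF⟩ := w.exists_mem_edges_of_colorable_two hw hcol
    · exact absurd (Set.mem_singleton_iff.mp hef ▸ he) hfw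
    · exact ⟨e, he, heF⟩
  obtain ⟨e, hea, heF⟩ := hmeet ha hfab.1
  obtain ⟨e', heb, he'F⟩ := hmeet hb hfab.2
  have hF1 : F.card ≤ 1 := by have := hcrit f hf; omega
  exact hab hea (Finset.card_le_one.mp hF1 e heF e' he'F ▸ heb)

theorem IsKLCritical.toSubgraph_eq_of_edges_subset [Finite V] (hG : IsKLCritical G 3 2)
    {a b c : V} {w : G.Walk a a} {w₁ : G.Walk b b} {w₂ : G.Walk c c} (hw : Odd w.length)
    (hw₁ : ¬w₁.Nil) (hw₂ : Odd w₂.length) (h₁₂ : w₁.edges.Disjoint w₂.edges)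
    (hsub : w.edges ⊆ w₁.edges) : w.toSubgraph = w₁.toSubgraph := by
  refine Walk.toSubgraph_eq_of_mem_edges_iff (Walk.not_nil_iff_lt_length.mpr hw.pos) hw₁
    fun e => ⟨fun he => hsub he, fun he => ?_⟩
  have := hG.mem_edges_or_mem_edges hw hw₂ (List.disjoint_of_subset_left hsub h₁₂)
    (w₁.edges_subset_edgeSet he)
  exact this.resolve_right (h₁₂ he)

theorem odd_cycles_intersect_in_more_than_one_vertex_general {V : Type} [Fintype V]
    (G : SimpleGraph V) (hcrit : IsKLCritical G 3 2)
    (hcyc : 3 ≤ {H : G.Subgraph | IsOddCycleSubgraph G H}.ncard)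
    (H₁ H₂ : G.Subgraph) (h₁ : IsOddCycleSubgraph G H₁) (h₂ : IsOddCycleSubgraph G H₂) :
    1 < (H₁.verts ∩ H₂.verts).ncard := by
  by_contra hle
  obtain ⟨a, w₁, hc₁, ho₁, rfl⟩ := h₁
  obtain ⟨b, w₂, hc₂, ho₂, rfl⟩ := h₂
  have hv : ({v | v ∈ w₁.support} ∩ {v | v ∈ w₂.support}).Subsingleton := by
    rw [← Walk.verts_toSubgraph, ← Walk.verts_toSubgraph]
    exact Set.ncard_le_one_iff_subsingleton.mp (not_lt.mp hle)
  have hdisj := Walk.edges_disjoint_of_subsingleton hv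
  have hodd : {H | IsOddCycleSubgraph G H} ⊆ {w₁.toSubgraph, w₂.toSubgraph} := by
    rintro _ ⟨c, w, hc, ho, rfl⟩
    have hsub e (he : e ∈ w.edges) :=
      hcrit.mem_edges_or_mem_edges ho₁ ho₂ hdisj (w.edges_subset_edgeSet he)
    rcases hc.edges_subset_or_edges_subset hv hsub with h | h
    · exact .inl (hcrit.toSubgraph_eq_of_edges_subset ho hc₁.not_nil ho₂ hdisj h)
    · exact .inr (hcrit.toSubgraph_eq_of_edges_subset ho hc₂.not_nil ho₁ hdisj.symm h)
  have := (Set.ncard_le_ncard hodd).trans (Set.ncard_insert_le _ _)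
  rw [Set.ncard_singleton] at this
  omega

/-- Lemma 2.6: if `G` is `(3,2)`-critical with at least three odd cycles, then every two
distinct odd cycles intersect in more than one vertex. -/
theorem odd_cycles_intersect_in_more_than_one_vertex {V : Type} [Fintype V]
    (G : SimpleGraph V) (hcrit : IsKLCritical G 3 2)
    (hcyc : 3 ≤ {H : G.Subgraph | IsOddCycleSubgraph G H}.ncard)
    (H₁ H₂ : G.Subgraph) (h₁ : IsOddCycleSubgraph G H₁) (h₂ : IsOddCycleSubgraph G H₂)
    (hne : H₁ ≠ H₂) :
    1 < (H₁.verts ∩ H₂.verts).ncard :=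
  odd_cycles_intersect_in_more_than_one_vertex_general G hcrit hcyc H₁ H₂ h₁ h₂
end

section
/- If a graph $G$ has exactly two odd cycles and these two odd cycles have a common edge, then $es_\chi(G)=1$. -/
/-!
Let `e` be a common edge of the two odd cycles. Every odd cycle of `G` passes through `e`, and an
odd closed walk always contains an odd cycle, so `G - e` has no odd closed walk and is bipartite.
Restoring `e` costs at most one extra colour while the odd cycle forces three, hence
`3 ≤ χ(G) ≤ χ(G - e) + 1 ≤ 3`: deleting the single edge `e` lowers the chromatic number.
-/

open SimpleGraph

namespace SimpleGraph

variable {V : Type*} {G : SimpleGraph V}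

namespace Walk

theorem exists_isPath_even_length_iff_or_exists_odd_cycle {u v : V} (p : G.Walk u v) :
    (∃ q : G.Walk u v, q.IsPath ∧ (Even q.length ↔ Even p.length)) ∨
      ∃ (x : V) (c : G.Walk x x), c.IsCycle ∧ Odd c.length := by
  classical
  induction p with
  | nil => exact Or.inl ⟨nil, .nil, Iff.rfl⟩
  | @cons u v w h p ih =>
    refine ih.elim (fun ⟨q, hq, hpar⟩ => ?_) Or.inr
    by_cases hu : u ∈ q.support
    -- `u` cuts `q` into `v ⟶ u`, which the edge `uv` closes into a cycle, and a path `u ⟶ w`;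
    -- if that cycle is even, the path `u ⟶ w` has the parity of `cons h p`.
    · have hsplit := congrArg length (q.take_spec hu)
      rw [length_append] at hsplit
      rcases Nat.even_or_odd (q.takeUntil u hu).length with heven | hodd
      · have hpos : (q.takeUntil u hu).length ≠ 0 := fun h0 => h.ne (eq_of_length_eq_zero h0).symm
        refine Or.inr ⟨u, cons h (q.takeUntil u hu), ?_, ?_⟩
        · rw [isCycle_iff_isPath_tail_and_le_length]
          refine ⟨by simpa using hq.takeUntil hu, ?_⟩
          obtain ⟨k, hk⟩ := heven
          simp only [length_cons]
          omega
        · simpa [Nat.odd_add_one] using heven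
      · refine Or.inl ⟨q.dropUntil u hu, hq.dropUntil hu, ?_⟩
        rw [length_cons, Nat.even_add_one, ← hpar, ← hsplit, Nat.even_add]
        simp [← Nat.not_odd_iff_even, hodd]
    · exact Or.inl ⟨cons h q, hq.cons hu, by simp [Nat.even_add_one, hpar]⟩

theorem exists_odd_cycle_of_odd_length {u : V} (p : G.Walk u u) (hp : Odd p.length) :
    ∃ (x : V) (c : G.Walk x x), c.IsCycle ∧ Odd c.length := by
  refine p.exists_isPath_even_length_iff_or_exists_odd_cycle.resolve_left ?_
  rintro ⟨q, hq, hpar⟩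
  rw [(isPath_iff_nil.mp hq).eq_nil, length_nil] at hpar
  exact Nat.not_even_iff_odd.mpr hp (hpar.mp (by decide))

end Walk

theorem two_colorable_iff_forall_isCycle_even :
    G.Colorable 2 ↔ ∀ (u : V) (c : G.Walk u u), c.IsCycle → Even c.length := by
  rw [two_colorable_iff_forall_loop_even]
  refine ⟨fun h u c _ => h u c, fun h u p => ?_⟩
  by_contra hp
  obtain ⟨x, c, hc, hodd⟩ := p.exists_odd_cycle_of_odd_length (Nat.not_even_iff_odd.mp hp)
  exact Nat.not_even_iff_odd.mpr hodd (h x c hc)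

theorem two_colorable_deleteEdges_of_forall_odd_cycle_mem_edges {e : Sym2 V}
    (h : ∀ (u : V) (c : G.Walk u u), c.IsCycle → Odd c.length → e ∈ c.edges) :
    (G.deleteEdges {e}).Colorable 2 := by
  refine two_colorable_iff_forall_isCycle_even.mpr fun u c hc => ?_
  by_contra hodd
  have hle : G.deleteEdges {e} ≤ G := deleteEdges_le _
  have he := h u (c.mapLe hle) (hc.mapLe hle) (by simpa [Nat.not_even_iff_odd] using hodd)
  have : e ∈ (G.deleteEdges {e}).edgeSet := c.edges_subset_edgeSet (by simpa [Walk.mapLe] using he)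
  simp at this

theorem Colorable.of_deleteEdges_singleton {e : Sym2 V} {n : ℕ}
    (h : (G.deleteEdges {e}).Colorable n) : G.Colorable (n + 1) := by
  classical
  induction e using Sym2.ind with
  | _ a b =>
    obtain ⟨C⟩ := h
    let C' : G.Coloring (Option (Fin n)) := Coloring.mk
      (fun x => if x = a then none else some (C x)) fun {x y} hxy => by
        by_cases hx : x = a <;> by_cases hy : y = a
        · exact absurd (hx.trans hy.symm) hxy.ne
        all_goals simp only [hx, hy, if_true, if_false, ne_eq, reduceCtorEq, not_false_eq_true,
          Option.some_inj]
        exact C.valid (by simp [hxy, hx, hy])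
    simpa using C'.colorable

theorem chromaticNumber_le_chromaticNumber_deleteEdges_singleton_add_one (e : Sym2 V) :
    G.chromaticNumber ≤ (G.deleteEdges {e}).chromaticNumber + 1 := by
  induction h : (G.deleteEdges {e}).chromaticNumber using ENat.recTopCoe with
  | top => simp
  | coe n =>
    have hn : (G.deleteEdges {e}).Colorable n := chromaticNumber_le_iff_colorable.mp h.le
    exact_mod_cast hn.of_deleteEdges_singleton.chromaticNumber_le

end SimpleGraph

theorem esChi_eq_one_of_chromaticNumber_deleteEdges_singleton {V : Type} {G : SimpleGraph V}
    {e : Sym2 V} (he : e ∈ G.edgeSet)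
    (hχ : (G.deleteEdges {e}).chromaticNumber + 1 = G.chromaticNumber)
    (hfin : G.chromaticNumber ≠ ⊤) : esChi G = 1 := by
  have hone : 1 ∈ {n : ℕ | ∃ F : Finset (Sym2 V), ↑F ⊆ G.edgeSet ∧ F.card = n ∧
      (G.deleteEdges ↑F).chromaticNumber + 1 = G.chromaticNumber} :=
    ⟨{e}, by simpa using he, Finset.card_singleton e, by simpa using hχ⟩
  refine le_antisymm (Nat.sInf_le hone) (Nat.one_le_iff_ne_zero.mpr ?_)
  rw [esChi, Ne, Nat.sInf_eq_zero]
  rintro (⟨F, -, hF, hχF⟩ | hempty)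
  · rw [Finset.card_eq_zero.mp hF, Finset.coe_empty, deleteEdges_empty] at hχF
    exact ((ENat.lt_add_one_iff hfin).mpr le_rfl).ne' hχF
  · exact Set.notMem_empty 1 (hempty ▸ hone)

theorem two_odd_cycles_common_edge_general {V : Type} (G : SimpleGraph V)
    (H₁ H₂ : G.Subgraph) (h₁ : IsOddCycleSubgraph G H₁)
    (hall : ∀ H : G.Subgraph, IsOddCycleSubgraph G H → H = H₁ ∨ H = H₂)
    (hedge : (H₁.edgeSet ∩ H₂.edgeSet).Nonempty) :
    esChi G = 1 := by
  obtain ⟨u, w, -, hodd, -⟩ := h₁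
  obtain ⟨e, he₁, he₂⟩ := hedge
  have hthrough : ∀ (x : V) (c : G.Walk x x), c.IsCycle → Odd c.length → e ∈ c.edges := by
    intro x c hc hc_odd
    rw [← Walk.mem_edges_toSubgraph]
    rcases hall _ ⟨x, c, hc, hc_odd, rfl⟩ with h | h <;> rw [h] <;> assumption
  have hthree : 3 ≤ G.chromaticNumber := w.three_le_chromaticNumber_of_odd_loop hodd
  have hle := G.chromaticNumber_le_chromaticNumber_deleteEdges_singleton_add_one e
  have htwo : (G.deleteEdges {e}).chromaticNumber ≤ 2 :=
    (two_colorable_deleteEdges_of_forall_odd_cycle_mem_edges hthrough).chromaticNumber_le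
  have hle_three : (G.deleteEdges {e}).chromaticNumber + 1 ≤ 3 := by
    calc (G.deleteEdges {e}).chromaticNumber + 1 ≤ 2 + 1 := by gcongr
      _ = 3 := rfl
  refine esChi_eq_one_of_chromaticNumber_deleteEdges_singleton (H₁.edgeSet_subset he₁)
    (le_antisymm (hle_three.trans hthree) hle) ?_
  exact ne_top_of_le_ne_top (by decide) (hle.trans hle_three)

/-- If `G` has exactly two odd cycles and these two cycles have a common edge, then
`esχ(G) = 1`. -/
theorem two_odd_cycles_common_edge {V : Type} [Fintype V] (G : SimpleGraph V)
    (H₁ H₂ : G.Subgraph) (h₁ : IsOddCycleSubgraph G H₁) (h₂ : IsOddCycleSubgraph G H₂)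
    (hne : H₁ ≠ H₂)
    (hall : ∀ H : G.Subgraph, IsOddCycleSubgraph G H → H = H₁ ∨ H = H₂)
    (hedge : (H₁.edgeSet ∩ H₂.edgeSet).Nonempty) :
    esChi G = 1 :=
  two_odd_cycles_common_edge_general G H₁ H₂ h₁ hall hedge
end

section
/- If $G$ is a $(3,2)$-critical graph that contains exactly four odd cycles, then every edge of $G$ is contained in at least two odd cycles of $G$. -/
open SimpleGraph

/-!
Criticality gives every edge `h` a partner `f` such that `G - h - f` is bipartite, i.e. every odd
cycle passes through `h` or `f`, while `esχ(G) = 2` means that no edge lies on all odd cycles.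
Suppose `e` lies on a single odd cycle `C₁`. Its partner `f` then lies on every other odd cycle, but
not on `C₁`. The symmetric difference of three odd cycles is an even subgraph with an odd number of
edges, hence contains an odd cycle; for `C₁` and two other odd cycles this cycle avoids `f`, so it
is `C₁`. Thus any two odd cycles other than `C₁` agree on the edges of `C₁`, so all of them are
edge-disjoint from `C₁`, and then partners of their edges force them to coincide, which is absurd
when there are at least three odd cycles.
-/

open scoped symmDiff

theorem Finset.sum_symmDiff_of_charTwo {ι R : Type*} [DecidableEq ι] [Semiring R] [CharP R 2]
    (s t : Finset ι) (f : ι → R) : ∑ i ∈ s ∆ t, f i = ∑ i ∈ s, f i + ∑ i ∈ t, f i := by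
  rw [symmDiff_def, sup_eq_union, Finset.sum_union disjoint_sdiff_sdiff,
    ← Finset.sum_inter_add_sum_sdiff s t, ← Finset.sum_inter_add_sum_sdiff t s, Finset.inter_comm,
    add_add_add_comm, CharTwo.add_self_eq_zero, zero_add]

section SetFamily

variable {α : Type*} {𝒞 : Set (Set α)}

theorem self_subset_symmDiff_of_forall_ne_mem
    (hclosed : ∀ A ∈ 𝒞, ∀ B ∈ 𝒞, ∀ C ∈ 𝒞, ∃ W ∈ 𝒞, W ⊆ A ∆ B ∆ C)
    {C₁ : Set α} {f : α} (hC₁ : C₁ ∈ 𝒞) (hf₁ : f ∉ C₁) (hf : ∀ C ∈ 𝒞, C ≠ C₁ → f ∈ C)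
    {A B : Set α} (hA : A ∈ 𝒞) (hB : B ∈ 𝒞) (hA₁ : A ≠ C₁) (hB₁ : B ≠ C₁) :
    C₁ ⊆ C₁ ∆ A ∆ B := by
  obtain ⟨W, hW, hWsub⟩ := hclosed C₁ hC₁ A hA B hB
  obtain rfl : W = C₁ := by
    by_contra hW₁
    simpa [Set.mem_symmDiff, hf₁, hf A hA hA₁, hf B hB hB₁] using hWsub (hf W hW hW₁)
  exact hWsub

theorem disjoint_of_forall_ne_mem
    (hclosed : ∀ A ∈ 𝒞, ∀ B ∈ 𝒞, ∀ C ∈ 𝒞, ∃ W ∈ 𝒞, W ⊆ A ∆ B ∆ C)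
    (hcommon : ∀ a, ∃ C ∈ 𝒞, a ∉ C)
    {C₁ : Set α} {f : α} (hC₁ : C₁ ∈ 𝒞) (hf₁ : f ∉ C₁) (hf : ∀ C ∈ 𝒞, C ≠ C₁ → f ∈ C)
    {A : Set α} (hA : A ∈ 𝒞) (hA₁ : A ≠ C₁) : Disjoint C₁ A := by
  refine Set.disjoint_left.2 fun a ha₁ haA => ?_
  obtain ⟨C, hC, haC⟩ := hcommon a
  have hC₁' : C ≠ C₁ := by
    rintro rfl
    exact haC ha₁
  simpa [Set.mem_symmDiff, ha₁, haA, haC] using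
    self_subset_symmDiff_of_forall_ne_mem hclosed hC₁ hf₁ hf hA hC hA₁ hC₁' ha₁

theorem exists_ne_mem_mem_of_symmDiff_closed {E : Set α} (hE : ∀ C ∈ 𝒞, C ⊆ E)
    (hcard : 2 < 𝒞.ncard) (hcommon : ∀ a, ∃ C ∈ 𝒞, a ∉ C)
    (hpair : ∀ a ∈ E, ∃ b, ∀ C ∈ 𝒞, a ∈ C ∨ b ∈ C)
    (hclosed : ∀ A ∈ 𝒞, ∀ B ∈ 𝒞, ∀ C ∈ 𝒞, ∃ W ∈ 𝒞, W ⊆ A ∆ B ∆ C) {e : α} (he : e ∈ E) :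
    ∃ C₁ ∈ 𝒞, ∃ C₂ ∈ 𝒞, C₁ ≠ C₂ ∧ e ∈ C₁ ∧ e ∈ C₂ := by
  by_contra! hone
  obtain ⟨f, hf⟩ := hpair e he
  obtain ⟨C₁, hC₁, hf₁⟩ := hcommon f
  have he₁ : e ∈ C₁ := (hf C₁ hC₁).resolve_right hf₁
  have hfC : ∀ C ∈ 𝒞, C ≠ C₁ → f ∈ C := fun C hC hC₁' =>
    (hf C hC).resolve_left (hone C₁ hC₁ C hC hC₁'.symm he₁)
  have hdisj : ∀ A ∈ 𝒞, A ≠ C₁ → Disjoint C₁ A := fun A hA hA₁ =>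
    disjoint_of_forall_ne_mem hclosed hcommon hC₁ hf₁ hfC hA hA₁
  have hsub : ∀ A ∈ 𝒞, ∀ B ∈ 𝒞, A ≠ C₁ → B ≠ C₁ → A ⊆ B := by
    intro A hA B hB hA₁ hB₁ b hbA
    by_contra hbB
    obtain ⟨g, hg⟩ := hpair b (hE A hA hbA)
    have hg₁ : g ∈ C₁ := (hg C₁ hC₁).resolve_left (Set.disjoint_right.1 (hdisj A hA hA₁) hbA)
    exact Set.disjoint_left.1 (hdisj B hB hB₁) hg₁ ((hg B hB).resolve_left hbB)
  have hfin : 𝒞.Finite := Set.finite_of_ncard_pos (by omega)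
  have hle : (𝒞 \ {C₁}).ncard ≤ 1 := (Set.ncard_le_one_iff hfin.sdiff).2 fun hA hB =>
    (hsub _ hA.1 _ hB.1 hA.2 hB.2).antisymm (hsub _ hB.1 _ hA.1 hB.2 hA.2)
  rw [Set.ncard_sdiff_singleton_of_mem hC₁] at hle
  omega

end SetFamily

namespace SimpleGraph

section OddCycles

variable {V : Type*} {G : SimpleGraph V}

theorem Walk.exists_isCycle_odd_of_odd_length {u : V} (p : G.Walk u u) (hp : Odd p.length) :
    ∃ (v : V) (c : G.Walk v v), c.IsCycle ∧ Odd c.length := by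
  induction hn : p.length using Nat.strong_induction_on generalizing u with
  | _ n ih =>
  cases p with
  | nil => simp at hp
  | cons h q =>
    by_cases hq : q.IsPath
    · refine ⟨_, _, isCycle_iff_isPath_tail_and_le_length.2 ⟨by simpa using hq, ?_⟩, hp⟩
      have hq₀ : q.length ≠ 0 := fun h₀ => h.ne (q.eq_of_length_eq_zero h₀).symm
      rw [length_cons] at hp ⊢
      rw [Nat.odd_iff] at hp
      omega
    -- A closed subwalk splits `p` into two shorter closed walks, one of which is odd.
    · obtain ⟨x, w, ⟨ru, rv, rfl⟩, hw⟩ : ∃ (x : V) (w : G.Walk x x), w.IsSubwalk q ∧ ¬ w.Nil := by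
        simpa [isPath_iff_isSubwalk_imp_nil] using hq
      have hw₀ := not_nil_iff_lt_length.1 hw
      have hlen : (cons h (ru.append rv)).length + w.length = n := by
        simp only [← hn, length_cons, length_append]; omega
      rw [hn, Nat.odd_iff] at hp
      rcases Nat.even_or_odd w.length with hwe | hwo
      · rw [Nat.even_iff] at hwe
        exact ih _ (by omega) (cons h (ru.append rv)) (Nat.odd_iff.2 (by omega)) rfl
      · exact ih _ (by rw [length_cons] at hlen; omega) w hwo rfl

theorem two_colorable_iff_forall_isCycle_even_s16 :
    G.Colorable 2 ↔ ∀ u (w : G.Walk u u), w.IsCycle → Even w.length := by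
  rw [two_colorable_iff_forall_loop_even]
  refine ⟨fun h u w _ => h u w, fun h u w => ?_⟩
  by_contra hw
  obtain ⟨v, c, hc, hodd⟩ := w.exists_isCycle_odd_of_odd_length (Nat.not_even_iff_odd.1 hw)
  exact Nat.not_even_iff_odd.2 hodd (h v c hc)

theorem deleteEdges_two_colorable_iff (s : Set (Sym2 V)) :
    (G.deleteEdges s).Colorable 2 ↔
      ∀ u (w : G.Walk u u), w.IsCycle → Odd w.length → (w.edgeSet ∩ s).Nonempty := by
  rw [two_colorable_iff_forall_isCycle_even_s16]
  constructor
  · intro h u w hc hodd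
    by_contra! hws
    have hw : ∀ e ∈ w.edges, e ∉ s := fun e he hes => hws.subset ⟨he, hes⟩
    exact Nat.not_even_iff_odd.2 hodd (by simpa using h u _ (hc.toDeleteEdges G s hw))
  · intro h u w hc
    by_contra hw
    obtain ⟨e, he, hes⟩ := h u _ ((Walk.isCycle_mapLe (G.deleteEdges_le s)).2 hc)
      (by simpa using Nat.not_even_iff_odd.1 hw)
    rw [Walk.mem_edgeSet, Walk.edges_mapLe_eq_edges] at he
    exact ((G.edgeSet_deleteEdges s ▸ w.edges_subset_edgeSet he) : e ∈ G.edgeSet \ s).2 hes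

theorem Walk.IsCycle.exists_mem_edges_ne {u : V} {w : G.Walk u u} (hc : w.IsCycle) (a : Sym2 V) :
    ∃ e ∈ w.edges, e ≠ a := by
  classical
  have hcard : 1 < w.edges.toFinset.card := by
    rw [List.toFinset_card_of_nodup hc.edges_nodup, length_edges]
    linarith [hc.three_le_length]
  obtain ⟨e, he, hea⟩ := Finset.exists_mem_ne hcard a
  exact ⟨e, List.mem_toFinset.1 he, hea⟩

theorem exists_odd_isCycle_of_chromaticNumber_eq_three (hχ : G.chromaticNumber = 3) :
    ∃ (u : V) (w : G.Walk u u), w.IsCycle ∧ Odd w.length := by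
  have h2 : ¬ G.Colorable 2 := fun h2 => absurd (hχ ▸ h2.chromaticNumber_le) (by norm_num)
  simpa [two_colorable_iff_forall_isCycle_even_s16, Nat.not_even_iff_odd] using h2

theorem chromaticNumber_deleteEdges_eq_two {s : Set (Sym2 V)}
    (hs : ∀ u (w : G.Walk u u), w.IsCycle → Odd w.length → (w.edgeSet ∩ s).Nonempty)
    {e : Sym2 V} (he : e ∈ G.edgeSet) (hes : e ∉ s) : (G.deleteEdges s).chromaticNumber = 2 :=
  chromaticNumber_eq_two_iff.2 ⟨(deleteEdges_two_colorable_iff s).2 hs,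
    edgeSet_nonempty.1 ⟨e, by rw [edgeSet_deleteEdges]; exact ⟨he, hes⟩⟩⟩

def monochromatic (c : V → ZMod 2) : Sym2 V → ZMod 2 :=
  Sym2.lift ⟨fun x y => c x + c y + 1, fun x y => by ring⟩

theorem Walk.sum_edges_monochromatic (c : V → ZMod 2) {u v : V} (p : G.Walk u v) :
    (p.edges.map (monochromatic c)).sum = p.length + c u + c v := by
  induction p with
  | nil => simp [CharTwo.add_self_eq_zero]
  | @cons u w v h q ih =>
    rw [edges_cons, List.map_cons, List.sum_cons, ih, length_cons, Nat.cast_succ]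
    simp only [monochromatic, Sym2.lift_mk]
    linear_combination CharTwo.add_self_eq_zero (c w)

theorem Walk.IsTrail.sum_toFinset_edges_monochromatic [DecidableEq V] (c : V → ZMod 2) {u : V}
    {p : G.Walk u u} (hp : p.IsTrail) :
    ∑ e ∈ p.edges.toFinset, monochromatic c e = p.length := by
  rw [List.sum_toFinset _ hp.edges_nodup, p.sum_edges_monochromatic, add_assoc,
    CharTwo.add_self_eq_zero, add_zero]

theorem exists_monochromatic_eq_zero_of_forall_not_subset {s : Set (Sym2 V)}
    (hs : ∀ u (w : G.Walk u u), w.IsCycle → Odd w.length → ¬ w.edgeSet ⊆ s) :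
    ∃ c : V → ZMod 2, ∀ e ∈ G.edgeSet ∩ s, monochromatic c e = 0 := by
  obtain ⟨col⟩ := (deleteEdges_two_colorable_iff sᶜ).2 fun u w hc ho =>
    Set.not_subset.1 (hs u w hc ho)
  refine ⟨col, fun e ⟨heG, hes⟩ => ?_⟩
  induction e with
  | _ x y =>
  have hne : col x ≠ col y := col.valid (deleteEdges_adj.2 ⟨heG, by simpa using hes⟩)
  have hZMod2 : ∀ a b : ZMod 2, a ≠ b → a + b + 1 = 0 := by decide
  exact hZMod2 _ _ hne

theorem exists_odd_isCycle_edgeSet_subset_symmDiff {u₁ u₂ u₃ : V}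
    {w₁ : G.Walk u₁ u₁} {w₂ : G.Walk u₂ u₂} {w₃ : G.Walk u₃ u₃}
    (ht₁ : w₁.IsTrail) (ht₂ : w₂.IsTrail) (ht₃ : w₃.IsTrail)
    (ho₁ : Odd w₁.length) (ho₂ : Odd w₂.length) (ho₃ : Odd w₃.length) :
    ∃ (v : V) (w : G.Walk v v), w.IsCycle ∧ Odd w.length ∧
      w.edgeSet ⊆ w₁.edgeSet ∆ w₂.edgeSet ∆ w₃.edgeSet := by
  classical
  by_contra! hno
  obtain ⟨c, hc⟩ := exists_monochromatic_eq_zero_of_forall_not_subset hno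
  -- Over the symmetric difference, `monochromatic c` sums to `1 + 1 + 1` by the three trails,
  -- but to `0` because `c` properly colours it.
  have hzero : ∑ e ∈ w₁.edges.toFinset ∆ w₂.edges.toFinset ∆ w₃.edges.toFinset,
      monochromatic c e = 0 := by
    refine Finset.sum_eq_zero fun e he => ?_
    simp only [Finset.mem_symmDiff, List.mem_toFinset] at he
    refine hc e ⟨?_, by simpa only [Set.mem_symmDiff, Walk.mem_edgeSet] using he⟩
    have he' : e ∈ w₁.edges ∨ e ∈ w₂.edges ∨ e ∈ w₃.edges := by tauto
    rcases he' with he' | he' | he' <;> exact Walk.edges_subset_edgeSet _ he'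
  rw [Finset.sum_symmDiff_of_charTwo, Finset.sum_symmDiff_of_charTwo,
    ht₁.sum_toFinset_edges_monochromatic, ht₂.sum_toFinset_edges_monochromatic,
    ht₃.sum_toFinset_edges_monochromatic, ZMod.natCast_eq_one_iff_odd.2 ho₁,
    ZMod.natCast_eq_one_iff_odd.2 ho₂, ZMod.natCast_eq_one_iff_odd.2 ho₃] at hzero
  exact absurd hzero (by decide)

end OddCycles

section EdgeStability

variable {V : Type} {G : SimpleGraph V}

theorem esChi_le_card {F : Finset (Sym2 V)} (hF : ↑F ⊆ G.edgeSet)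
    (hχ : (G.deleteEdges ↑F).chromaticNumber + 1 = G.chromaticNumber) : esChi G ≤ F.card :=
  Nat.sInf_le ⟨F, hF, rfl, hχ⟩

theorem exists_finset_card_eq_esChi [Finite V] (hχ : G.chromaticNumber = 3) :
    ∃ F : Finset (Sym2 V), ↑F ⊆ G.edgeSet ∧ F.card = esChi G ∧
      (G.deleteEdges ↑F).chromaticNumber + 1 = G.chromaticNumber := by
  classical
  obtain ⟨u, w, hc, -⟩ := exists_odd_isCycle_of_chromaticNumber_eq_three hχ
  obtain ⟨e, he⟩ := List.exists_mem_of_ne_nil w.edges (by simpa using hc.not_nil)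
  have heG := w.edges_subset_edgeSet he
  -- `sInf ∅ = 0`, so the set has to be shown nonempty: delete all edges but one.
  refine Nat.sInf_mem (s := {n : ℕ | ∃ F : Finset (Sym2 V), ↑F ⊆ G.edgeSet ∧ F.card = n ∧
    (G.deleteEdges ↑F).chromaticNumber + 1 = G.chromaticNumber})
    ⟨_, G.edgeSet.toFinite.toFinset.erase e, by simp +contextual [Set.subset_def], rfl, ?_⟩
  rw [chromaticNumber_deleteEdges_eq_two (e := e) ?_ heG (by simp), hχ]
  · rfl
  · intro v w' hc' _
    obtain ⟨e', he', he'e⟩ := hc'.exists_mem_edges_ne e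
    exact ⟨e', he', by simpa [he'e] using w'.edges_subset_edgeSet he'⟩

theorem exists_isOddCycleSubgraph_not_mem (hχ : G.chromaticNumber = 3) (hes : 1 < esChi G)
    (a : Sym2 V) : ∃ H, IsOddCycleSubgraph G H ∧ a ∉ H.edgeSet := by
  by_contra! hall
  have hall' : ∀ u (w : G.Walk u u), w.IsCycle → Odd w.length → a ∈ w.edgeSet :=
    fun u w hc ho => by simpa using hall _ ⟨u, w, hc, ho, rfl⟩
  obtain ⟨u, w, hc, ho⟩ := exists_odd_isCycle_of_chromaticNumber_eq_three hχ
  obtain ⟨e, he, hea⟩ := hc.exists_mem_edges_ne a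
  have h2 : (G.deleteEdges {a}).chromaticNumber = 2 :=
    chromaticNumber_deleteEdges_eq_two (fun u w hc ho => ⟨a, hall' u w hc ho, rfl⟩)
      (w.edges_subset_edgeSet he) hea
  have := esChi_le_card (F := {a}) (by simpa using w.edges_subset_edgeSet (hall' u w hc ho))
    (by rw [Finset.coe_singleton, h2, hχ]; rfl)
  rw [Finset.card_singleton] at this
  omega

theorem chromaticNumber_deleteEdges_singleton_eq_three (hχ : G.chromaticNumber = 3)
    (hes : 1 < esChi G) (h : Sym2 V) : (G.deleteEdges {h}).chromaticNumber = 3 := by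
  refine le_antisymm ((chromaticNumber_mono _ (deleteEdges_le _)).trans hχ.le) ?_
  obtain ⟨_, ⟨u, w, hc, ho, rfl⟩, hwh⟩ := exists_isOddCycleSubgraph_not_mem hχ hes h
  have hw : ∀ e ∈ w.edges, e ∉ ({h} : Set (Sym2 V)) := by
    rintro e he rfl
    exact hwh (by simpa using he)
  exact (w.toDeleteEdges _ hw).three_le_chromaticNumber_of_odd_loop (by simpa using ho)

theorem exists_forall_isOddCycleSubgraph_mem_or_mem [Finite V] (hcrit : IsKLCritical G 3 2)
    {h : Sym2 V} (hh : h ∈ G.edgeSet) :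
    ∃ f, ∀ H, IsOddCycleSubgraph G H → h ∈ H.edgeSet ∨ f ∈ H.edgeSet := by
  obtain ⟨hstab, hχ, hes⟩ := hcrit
  rw [Nat.cast_ofNat] at hχ
  have hχ' := chromaticNumber_deleteEdges_singleton_eq_three hχ (by omega) h
  obtain ⟨F, -, hFcard, hFχ⟩ := exists_finset_card_eq_esChi hχ'
  have : Nonempty (Sym2 V) := ⟨h⟩
  obtain ⟨f, hFf⟩ := Finset.card_le_one_iff_subset_singleton.1
    (show F.card ≤ 1 by have := hstab h hh; omega)
  refine ⟨f, ?_⟩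
  rintro _ ⟨u, w, hc, ho, rfl⟩
  rw [hχ', show (3 : ℕ∞) = 2 + 1 by norm_num] at hFχ
  have hcol : (G.deleteEdges ({h} ∪ ↑F)).Colorable 2 := by
    rw [← deleteEdges_deleteEdges, ← chromaticNumber_le_iff_colorable,
      ENat.add_left_injective_of_ne_top ENat.one_ne_top hFχ]
    norm_num
  obtain ⟨e, hew, heF⟩ := (deleteEdges_two_colorable_iff _).1 hcol u w hc ho
  rw [Walk.edgeSet_toSubgraph]
  rcases heF with rfl | heF
  · exact Or.inl hew
  · exact Or.inr (by simpa [Finset.mem_singleton.1 (hFf heF)] using hew)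

theorem exists_isOddCycleSubgraph_edgeSet_subset_symmDiff {H₁ H₂ H₃ : G.Subgraph}
    (h₁ : IsOddCycleSubgraph G H₁) (h₂ : IsOddCycleSubgraph G H₂) (h₃ : IsOddCycleSubgraph G H₃) :
    ∃ W, IsOddCycleSubgraph G W ∧ W.edgeSet ⊆ H₁.edgeSet ∆ H₂.edgeSet ∆ H₃.edgeSet := by
  obtain ⟨_, w₁, hc₁, ho₁, rfl⟩ := h₁
  obtain ⟨_, w₂, hc₂, ho₂, rfl⟩ := h₂
  obtain ⟨_, w₃, hc₃, ho₃, rfl⟩ := h₃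
  obtain ⟨v, w, hc, ho, hsub⟩ := exists_odd_isCycle_edgeSet_subset_symmDiff
    hc₁.isTrail hc₂.isTrail hc₃.isTrail ho₁ ho₂ ho₃
  exact ⟨_, ⟨v, w, hc, ho, rfl⟩, by simpa only [Walk.edgeSet_toSubgraph] using hsub⟩

theorem injOn_edgeSet_isOddCycleSubgraph :
    {H : G.Subgraph | IsOddCycleSubgraph G H}.InjOn Subgraph.edgeSet := by
  rintro _ ⟨_, w, hc, -, rfl⟩ _ ⟨_, w', hc', -, rfl⟩ heq
  rw [Walk.edgeSet_toSubgraph, Walk.edgeSet_toSubgraph] at heq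
  exact ((Walk.toSubgraph_le_iff hc.not_nil).2 (by rw [heq, Walk.edgeSet_toSubgraph])).antisymm
    ((Walk.toSubgraph_le_iff hc'.not_nil).2 (by rw [← heq, Walk.edgeSet_toSubgraph]))

end EdgeStability

end SimpleGraph

/-- If `G` is `(3,2)`-critical with exactly four odd cycles, then every edge of `G` lies in
at least two odd cycles of `G`. -/
theorem every_edge_in_two_odd_cycles {V : Type} [Fintype V] (G : SimpleGraph V)
    (hcrit : IsKLCritical G 3 2)
    (hcyc : {H : G.Subgraph | IsOddCycleSubgraph G H}.ncard = 4) :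
    ∀ e ∈ G.edgeSet, ∃ H₁ H₂ : G.Subgraph,
      IsOddCycleSubgraph G H₁ ∧ IsOddCycleSubgraph G H₂ ∧ H₁ ≠ H₂ ∧
      e ∈ H₁.edgeSet ∧ e ∈ H₂.edgeSet := by
  intro e he
  have hχ : G.chromaticNumber = 3 := by rw [hcrit.2.1, Nat.cast_ofNat]
  set 𝒞 := Subgraph.edgeSet '' {H : G.Subgraph | IsOddCycleSubgraph G H}
  have hcommon (a : Sym2 V) : ∃ C ∈ 𝒞, a ∉ C := by
    obtain ⟨H, hH, ha⟩ := exists_isOddCycleSubgraph_not_mem hχ (by rw [hcrit.2.2]; norm_num) a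
    exact ⟨_, Set.mem_image_of_mem _ hH, ha⟩
  have hpair (a : Sym2 V) (ha : a ∈ G.edgeSet) : ∃ b, ∀ C ∈ 𝒞, a ∈ C ∨ b ∈ C := by
    obtain ⟨b, hb⟩ := exists_forall_isOddCycleSubgraph_mem_or_mem hcrit ha
    exact ⟨b, Set.forall_mem_image.2 hb⟩
  have hclosed : ∀ A ∈ 𝒞, ∀ B ∈ 𝒞, ∀ C ∈ 𝒞, ∃ W ∈ 𝒞, W ⊆ A ∆ B ∆ C := by
    rintro _ ⟨H₁, h₁, rfl⟩ _ ⟨H₂, h₂, rfl⟩ _ ⟨H₃, h₃, rfl⟩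
    obtain ⟨W, hW, hsub⟩ := exists_isOddCycleSubgraph_edgeSet_subset_symmDiff h₁ h₂ h₃
    exact ⟨_, Set.mem_image_of_mem _ hW, hsub⟩
  obtain ⟨_, ⟨H₁, hH₁, rfl⟩, _, ⟨H₂, hH₂, rfl⟩, hne, he₁, he₂⟩ :=
    exists_ne_mem_mem_of_symmDiff_closed (by rintro _ ⟨H, -, rfl⟩; exact H.edgeSet_subset)
      (by rw [injOn_edgeSet_isOddCycleSubgraph.ncard_image, hcyc]; norm_num)
      hcommon hpair hclosed he
  exact ⟨H₁, H₂, hH₁, hH₂, fun h => hne (h ▸ rfl), he₁, he₂⟩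
end
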